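/- For N ∈ ℕ and U ∈ U(N), consider the family of operators T_U = −i d/dt on L²([0,1], ℂᴺ) with domain the Sobolev space of f ∈ L^{1,2}([0,1],ℂᴺ) satisfying f(1) = U f(0). Let W be the orthogonal complement in L²([0,1],ℂᴺ) of the constant functions. Then the switched graph of T_U is clean with W (the system T_U φ = 0, ∫₀¹ φ dt = 0 has only the trivial solution), and the symplectic reduction of the switched graph of T_U with respect to W is the subspace L_U = {(i(1−U)b, (1/2)(1+U)b) : b ∈ ℂᴺ} ⊆ ℂᴺ ⊕ ℂᴺ. Moreover, setting U₁ := (1−3U)(3−U)⁻¹, the subspace L_U equals {((1+U₁)a, −i(1−U₁)a) : a ∈ ℂᴺ}, i.e. L_U is the Cayley graph of U₁, and U ↦ (1−3U)(3−U)⁻¹ is an involutive diffeomorphism of U(N). -/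

import Mathlib

/-!
A solution of `T_U φ = c` is affine, `φ t = b + i t c`, so the boundary condition and the mean
value express `c` and `∫₀¹ φ` linearly in `b = φ 0`; for `c = 0` the mean value is `b` itself,
which gives cleanness. The map `z ↦ (1 - 3z)/(3 - z)` is the Möbius transformation of the
matrix `[[-3, 1], [-1, 3]]`, whose square is `8`, hence an involution; it preserves the unit
circle since `(1 - 3z̄)(1 - 3z) - (3 - z̄)(3 - z) = 8 (z̄ z - 1)`. Unitarity of `U` keeps `3` out
of its spectrum, and the substitution `a = (i/4)(3 - U) b` turns the parametrisation of `L_U`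
into that of the Cayley graph of `U₁`.
-/

noncomputable section

open Matrix

/-- The involution `U ↦ (1 - 3U)(3 - U)⁻¹` of `U(N)`. -/
def redU (N : ℕ) (U : Matrix (Fin N) (Fin N) ℂ) : Matrix (Fin N) (Fin N) ℂ :=
  (1 - (3 : ℂ) • U) * ((3 : Matrix (Fin N) (Fin N) ℂ) - U)⁻¹

section ConstantDerivative

variable {E : Type*} [NormedAddCommGroup E] [NormedSpace ℝ E] {φ : ℝ → E} {v : E}

theorem eq_add_smul_of_hasDerivAt_const (h : ∀ t, HasDerivAt φ v t) (t : ℝ) :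
    φ t = φ 0 + t • v := by
  have hψ : ∀ s, HasDerivAt (fun s => φ s - s • v) 0 s := fun s => by
    have := (h s).sub ((hasDerivAt_id' s).smul_const v)
    rwa [one_smul, sub_self] at this
  have hconst := is_const_of_deriv_eq_zero (fun s => (hψ s).differentiableAt)
    (fun s => (hψ s).deriv) t 0
  rw [zero_smul, sub_zero, sub_eq_iff_eq_add] at hconst
  rw [hconst, add_comm]

variable [CompleteSpace E]

theorem intervalIntegral_zero_one_of_hasDerivAt_const (h : ∀ t, HasDerivAt φ v t) :
    ∫ t in (0 : ℝ)..1, φ t = φ 0 + (2⁻¹ : ℝ) • v := by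
  rw [intervalIntegral.integral_congr fun t _ => eq_add_smul_of_hasDerivAt_const h t,
    intervalIntegral.integral_add intervalIntegrable_const
      (Continuous.intervalIntegrable (by fun_prop) _ _),
    intervalIntegral.integral_const, intervalIntegral.integral_smul_const, integral_id]
  norm_num

theorem eq_zero_of_hasDerivAt_zero_of_intervalIntegral_eq_zero
    (h : ∀ t, HasDerivAt φ 0 t) (hint : ∫ t in (0 : ℝ)..1, φ t = 0) (t : ℝ) : φ t = 0 := by
  rw [intervalIntegral_zero_one_of_hasDerivAt_const h, smul_zero, add_zero] at hint
  rw [eq_add_smul_of_hasDerivAt_const h, smul_zero, add_zero, hint]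

end ConstantDerivative

section BoundaryProblem

open Complex

variable {n : Type*} [Fintype n] {U : Matrix n n ℂ} {φ : ℝ → n → ℂ}

theorem eq_mulVec_sub_of_boundary {v : n → ℂ} (hφ : ∀ t, HasDerivAt φ v t)
    (hbc : φ 1 = U *ᵥ φ 0) : v = U *ᵥ φ 0 - φ 0 := by
  rw [← hbc, eq_add_smul_of_hasDerivAt_const hφ 1, one_smul, add_sub_cancel_left]

variable [DecidableEq n]

theorem eq_I_smul_one_sub_mulVec_of_boundary {c : n → ℂ} (hφ : ∀ t, HasDerivAt φ (I • c) t)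
    (hbc : φ 1 = U *ᵥ φ 0) : c = I • ((1 - U) *ᵥ φ 0) := by
  rw [sub_mulVec, one_mulVec]
  linear_combination (norm := skip) (-I) • eq_mulVec_sub_of_boundary hφ hbc
  match_scalars <;> simp

theorem intervalIntegral_eq_of_boundary {v : n → ℂ} (hφ : ∀ t, HasDerivAt φ v t)
    (hbc : φ 1 = U *ᵥ φ 0) :
    ∫ t in (0 : ℝ)..1, φ t = (1 / 2 : ℂ) • ((1 + U) *ᵥ φ 0) := by
  rw [intervalIntegral_zero_one_of_hasDerivAt_const hφ, eq_mulVec_sub_of_boundary hφ hbc,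
    ← Complex.coe_smul, add_mulVec, one_mulVec]
  module

theorem exists_boundary_solution (U : Matrix n n ℂ) (b : n → ℂ) :
    ∃ φ : ℝ → n → ℂ, φ 0 = b ∧ (∀ t, HasDerivAt φ (I • I • ((1 - U) *ᵥ b)) t) ∧
      φ 1 = U *ᵥ φ 0 := by
  have hv : I • I • ((1 - U) *ᵥ b) = U *ᵥ b - b := by
    rw [smul_smul, I_mul_I, sub_mulVec, one_mulVec]
    module
  refine ⟨fun t => b + t • (U *ᵥ b - b), by simp, fun t => ?_, by simp⟩
  rw [hv]
  simpa using ((hasDerivAt_id' t).smul_const (U *ᵥ b - b)).const_add b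

end BoundaryProblem

theorem isUnit_algebraMap_sub_of_mem_unitary {A : Type*} [CStarAlgebra A] {u : A}
    (hu : u ∈ unitary A) {z : ℂ} (hz : ‖z‖ ≠ 1) : IsUnit (algebraMap ℂ A z - u) :=
  spectrum.notMem_iff.mp fun hmem => hz (spectrum.norm_eq_one_of_unitary hu hmem)

open scoped Matrix.Norms.L2Operator in
theorem Matrix.isUnit_three_sub_of_mem_unitaryGroup {n : Type*} [Fintype n] [DecidableEq n]
    {U : Matrix n n ℂ} (hU : U ∈ unitaryGroup n ℂ) : IsUnit (3 - U) := by
  have h := isUnit_algebraMap_sub_of_mem_unitary (z := 3) hU (by norm_num)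
  rwa [map_ofNat] at h

theorem ofNat_mul_eq_smul {A : Type*} [Semiring A] [Algebra ℂ A] (k : ℕ) [k.AtLeastTwo] (a : A) :
    (OfNat.ofNat k : A) * a = (OfNat.ofNat k : ℂ) • a := by
  rw [Algebra.smul_def, map_ofNat]

theorem star_one_sub_three_mul_mul_self {R : Type*} [Ring R] [StarRing R] {u : R}
    (hu : star u * u = 1) : star (1 - 3 * u) * (1 - 3 * u) = star (3 - u) * (3 - u) := by
  have key : star (1 - 3 * u) * (1 - 3 * u) = star (3 - u) * (3 - u) + 8 * (star u * u - 1) := by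
    simp only [star_sub, star_one, star_mul, star_ofNat]
    grind
  rw [key, hu, sub_self, mul_zero, add_zero]

section Involution

variable {N : ℕ} {U : Matrix (Fin N) (Fin N) ℂ}

theorem redU_eq : redU N U = (1 - 3 * U) * (3 - U)⁻¹ := by
  rw [redU, ← ofNat_mul_eq_smul]

theorem redU_mul_three_sub (h : IsUnit (3 - U)) : redU N U * (3 - U) = 1 - 3 * U := by
  rw [redU_eq, nonsing_inv_mul_cancel_right _ _ ((isUnit_iff_isUnit_det _).mp h)]

theorem one_add_redU_mul_three_sub (h : IsUnit (3 - U)) :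
    (1 + redU N U) * (3 - U) = 4 * (1 - U) := by
  rw [add_mul, redU_mul_three_sub h]
  grind

theorem one_sub_redU_mul_three_sub (h : IsUnit (3 - U)) :
    (1 - redU N U) * (3 - U) = 2 * (1 + U) := by
  rw [sub_mul, redU_mul_three_sub h]
  grind

theorem redU_redU (h : IsUnit (3 - U)) : redU N (redU N U) = U := by
  have hnum : (1 - 3 * redU N U) * (3 - U) = 8 * U := by
    rw [sub_mul, mul_assoc, redU_mul_three_sub h]
    grind
  have hden : (3 - redU N U) * (3 - U) = 8 := by
    rw [sub_mul, redU_mul_three_sub h]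
    grind
  have hinv : (3 - redU N U)⁻¹ = (8⁻¹ : ℂ) • (3 - U) := by
    refine inv_eq_right_inv ?_
    rw [mul_smul_comm, hden, ← mul_one (8 : Matrix (Fin N) (Fin N) ℂ), ofNat_mul_eq_smul,
      smul_smul]
    norm_num
  rw [redU_eq, hinv, mul_smul_comm, hnum, ofNat_mul_eq_smul, smul_smul]
  norm_num

theorem redU_mem_unitaryGroup (hU : U ∈ unitaryGroup (Fin N) ℂ) :
    redU N U ∈ unitaryGroup (Fin N) ℂ := by
  have hdet := (isUnit_iff_isUnit_det _).mp (isUnit_three_sub_of_mem_unitaryGroup hU)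
  rw [mem_unitaryGroup_iff', redU_eq]
  calc star ((1 - 3 * U) * (3 - U)⁻¹) * ((1 - 3 * U) * (3 - U)⁻¹)
      = star (3 - U)⁻¹ * (star (1 - 3 * U) * (1 - 3 * U)) * (3 - U)⁻¹ := by
        simp only [star_mul, mul_assoc]
    _ = star ((3 - U) * (3 - U)⁻¹) * ((3 - U) * (3 - U)⁻¹) := by
        rw [star_one_sub_three_mul_mul_self (mem_unitaryGroup_iff'.mp hU)]
        simp only [star_mul, mul_assoc]
    _ = 1 := by rw [mul_nonsing_inv _ hdet, star_one, one_mul]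

end Involution

open Complex in
theorem reduction_eq_cayleyGraph_redU {N : ℕ} {U : Matrix (Fin N) (Fin N) ℂ}
    (h : IsUnit (3 - U)) :
    {p : (Fin N → ℂ) × (Fin N → ℂ) |
        ∃ b, p = (I • ((1 - U) *ᵥ b), (1 / 2 : ℂ) • ((1 + U) *ᵥ b))} =
      {p | ∃ a, p = ((1 + redU N U) *ᵥ a, (-I) • ((1 - redU N U) *ᵥ a))} := by
  let substitution : (Fin N → ℂ) → Fin N → ℂ := fun b => (I / 4) • ((3 - U) *ᵥ b)
  have hsurj : Function.Surjective substitution :=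
    (MulAction.surjective₀ (by simp)).comp (mulVec_surjective_iff_isUnit.mpr h)
  have hsubst : ∀ b, (I • ((1 - U) *ᵥ b), (1 / 2 : ℂ) • ((1 + U) *ᵥ b)) =
      ((1 + redU N U) *ᵥ substitution b, (-I) • ((1 - redU N U) *ᵥ substitution b)) := by
    intro b
    simp only [substitution]
    rw [mulVec_smul, mulVec_smul, mulVec_mulVec, mulVec_mulVec, one_add_redU_mul_three_sub h,
      one_sub_redU_mul_three_sub h, ofNat_mul_eq_smul, ofNat_mul_eq_smul, smul_mulVec, smul_mulVec]
    refine Prod.ext ?_ ?_ <;> match_scalars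
    · ring
    · linear_combination (1 / 2 : ℂ) * I_mul_I
  ext p
  constructor
  · rintro ⟨b, rfl⟩
    exact ⟨substitution b, hsubst b⟩
  · rintro ⟨a, rfl⟩
    obtain ⟨b, rfl⟩ := hsurj a
    exact ⟨b, (hsubst b).symm⟩

theorem universal_family_reduction (N : ℕ) (U : Matrix (Fin N) (Fin N) ℂ)
    (hU : U ∈ Matrix.unitaryGroup (Fin N) ℂ) :
    -- (i) cleanness of the switched graph of `T_U` with `W`
    (∀ φ : ℝ → (Fin N → ℂ),
      (∀ t : ℝ, HasDerivAt φ (0 : Fin N → ℂ) t) →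
      φ 1 = U.mulVec (φ 0) →
      (∫ t in (0:ℝ)..1, φ t) = 0 →
      ∀ t : ℝ, φ t = 0) ∧
    -- (ii) computation of the symplectic reduction: `T_U φ = c` means `φ' = i c`
    (∀ (c : Fin N → ℂ) (φ : ℝ → (Fin N → ℂ)),
      (∀ t : ℝ, HasDerivAt φ (Complex.I • c) t) →
      φ 1 = U.mulVec (φ 0) →
      (c = Complex.I • ((1 - U).mulVec (φ 0)) ∧
        (∫ t in (0:ℝ)..1, φ t) = (1 / 2 : ℂ) • ((1 + U).mulVec (φ 0)))) ∧
    (∀ b : Fin N → ℂ, ∃ φ : ℝ → (Fin N → ℂ), φ 0 = b ∧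
      (∀ t : ℝ, HasDerivAt φ (Complex.I • (Complex.I • ((1 - U).mulVec b))) t) ∧
      φ 1 = U.mulVec (φ 0)) ∧
    -- (iii) identification of the reduction with the Cayley graph of `U₁ = redU N U`
    IsUnit ((3 : Matrix (Fin N) (Fin N) ℂ) - U) ∧
    (redU N U ∈ Matrix.unitaryGroup (Fin N) ℂ) ∧
    (redU N (redU N U) = U) ∧
    ({p : (Fin N → ℂ) × (Fin N → ℂ) | ∃ b : Fin N → ℂ,
        p = (Complex.I • ((1 - U).mulVec b), (1 / 2 : ℂ) • ((1 + U).mulVec b))} =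
      {p : (Fin N → ℂ) × (Fin N → ℂ) | ∃ a : Fin N → ℂ,
        p = ((1 + redU N U).mulVec a, (-Complex.I) • ((1 - redU N U).mulVec a))}) := by
  have h3U := isUnit_three_sub_of_mem_unitaryGroup hU
  exact ⟨fun φ hφ _ hint => eq_zero_of_hasDerivAt_zero_of_intervalIntegral_eq_zero hφ hint,
    fun c φ hφ hbc =>
      ⟨eq_I_smul_one_sub_mulVec_of_boundary hφ hbc, intervalIntegral_eq_of_boundary hφ hbc⟩,
    exists_boundary_solution U, h3U, redU_mem_unitaryGroup hU, redU_redU h3U,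
    reduction_eq_cayleyGraph_redU h3U⟩
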